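/- Let G be a finite connected simple graph on V ≥ 2 vertices with edge connectivity η and maximal vertex degree deg_max(G). Then the smallest nonzero eigenvalue of the normalized Laplacian satisfies α_1(G) ≥ (2η/deg_max(G)) · (1 − cos(π/V)). -/

import Mathlib

/-!
Sort the vertices by the values of a test function `f`, `f v₀ ≤ ⋯ ≤ f vₙ₋₁`. Each of the `n - 1`
cuts `{v₀, …, vᵢ}` is crossed by at least `η` edges, and an edge `vₐv_b` with `a < b` has
`(f v_b - f vₐ)² ≥ ∑_{a ≤ i < b} (f vᵢ₊₁ - f vᵢ)²`, so the Dirichlet energy of `f` is at least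
`η ∑ᵢ (f vᵢ₊₁ - f vᵢ)²`. Orthogonality of `f` to the degrees lets one subtract the mean `m` of `f`
in the denominator: `∑ f² deg ≤ deg_max ∑ (f - m)²`. What remains is the spectral gap
`2 (1 - cos (π / n))` of the path on `n` vertices. Reflecting the mean-zero sequence `f vᵢ - m` to
an even sequence on `ℤ/2n` reduces it to the cycle, where Parseval for the discrete Fourier
transform applies: the difference operator multiplies the `k`-th mode by `e^{2πik/N} - 1`, of
modulus at least `2 sin (π / N)` for `k ≠ 0`, and the zero mode vanishes.
-/

open scoped Classical
open Real Finset

/-- The smallest nonzero eigenvalue of the normalized Laplacian of a finite connected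
simple graph, defined variationally. -/
noncomputable def alpha1 {V : Type*} [Fintype V] (G : SimpleGraph V) : ℝ :=
  sInf {r | ∃ f : V → ℝ, f ≠ 0 ∧ (∑ v, f v * (G.degree v : ℝ)) = 0 ∧
    r = (∑ e ∈ G.edgeFinset,
        Sym2.lift ⟨fun u v => |f u - f v| ^ 2,
          fun u v => by dsimp only; rw [abs_sub_comm]⟩ e) /
      (∑ v, |f v| ^ 2 * (G.degree v : ℝ))}

/-- The edge connectivity of a graph: the smallest number of edges whose deletion
disconnects the graph. -/
noncomputable def edgeConnectivity {V : Type*} [Fintype V] (G : SimpleGraph V) : ℕ :=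
  sInf {k | ∃ s : Finset (Sym2 V), ↑s ⊆ G.edgeSet ∧ s.card = k ∧
    ¬ (G.deleteEdges ↑s).Connected}

open scoped ZMod ComplexConjugate

theorem Real.sin_pi_div_le_sin_pi_mul_div {N t : ℕ} (ht : 1 ≤ t) (htN : t + 1 ≤ N) :
    sin (π / N) ≤ sin (π * t / N) := by
  have hN : (0 : ℝ) < N := by exact_mod_cast (show 0 < N by omega)
  have ht' : (1 : ℝ) ≤ t := by exact_mod_cast ht
  have htN' : (t : ℝ) ≤ N - 1 := by
    rw [le_sub_iff_add_le]; exact_mod_cast htN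
  have hmem : ∀ s : ℝ, 0 ≤ s → s ≤ N → π * s / N ∈ Set.Icc 0 π := fun s h0 h1 =>
    ⟨by positivity, by rw [div_le_iff₀ hN]; nlinarith [pi_pos]⟩
  have hend : sin (π * (N - 1 : ℝ) / N) = sin (π / N) := by
    rw [← sin_pi_sub]; congr 1; field_simp; ring
  have hconc := strictConcaveOn_sin_Icc.concaveOn.min_le_of_mem_Icc
    (hmem 1 zero_le_one (by linarith)) (hmem (N - 1) (by linarith) (by linarith))
    (z := π * t / N) ⟨by gcongr, by gcongr⟩
  rwa [hend, mul_one, min_self] at hconc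

namespace ZMod

variable {N : ℕ} [NeZero N]

theorem dft_comp_add_right {E : Type*} [AddCommGroup E] [Module ℂ E] (Φ : ZMod N → E)
    (a k : ZMod N) : 𝓕 (fun j ↦ Φ (j + a)) k = stdAddChar (a * k) • 𝓕 Φ k := by
  calc 𝓕 (fun j ↦ Φ (j + a)) k
      = ∑ j, (fun i ↦ stdAddChar (-((i - a) * k)) • Φ i) (j + a) := by
        simp only [dft_apply, add_sub_cancel_right]
    _ = ∑ i, stdAddChar (-((i - a) * k)) • Φ i :=
        Equiv.sum_comp (Equiv.addRight a) fun i ↦ stdAddChar (-((i - a) * k)) • Φ i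
    _ = stdAddChar (a * k) • 𝓕 Φ k := by
        rw [dft_apply, smul_sum]
        refine sum_congr rfl fun i _ => ?_
        rw [smul_smul, ← AddChar.map_add_eq_mul]
        ring_nf

theorem sum_comp_val {M : Type*} [AddCommMonoid M] (f : ℕ → M) :
    ∑ j : ZMod N, f j.val = ∑ i ∈ range N, f i := by
  obtain ⟨k, rfl⟩ : ∃ k, N = k + 1 := Nat.exists_eq_succ_of_ne_zero (NeZero.ne N)
  exact Fin.sum_univ_eq_sum_range f (k + 1)

theorem val_add_one (j : ZMod N) : (j + 1).val = (j.val + 1) % N := by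
  rw [val_add, val_one_eq_one_mod, Nat.add_mod_mod]

theorem sum_norm_sq_dft (Φ : ZMod N → ℂ) :
    ∑ k, ‖𝓕 Φ k‖ ^ 2 = N * ∑ j, ‖Φ j‖ ^ 2 := by
  have hchar (j l : ZMod N) : ∑ k : ZMod N, stdAddChar (-(j * k)) * conj (stdAddChar (-(l * k))) =
      if j = l then (N : ℂ) else 0 := by
    calc _ = ∑ k : ZMod N, stdAddChar (k * (l - j)) := by
          refine sum_congr rfl fun k _ => ?_
          rw [← AddChar.map_neg_eq_conj, ← AddChar.map_add_eq_mul]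
          ring_nf
      _ = _ := by
          rw [AddChar.sum_mulShift _ (isPrimitive_stdAddChar N)]
          simp [sub_eq_zero, eq_comm]
  apply Complex.ofReal_injective
  push_cast
  simp only [← Complex.mul_conj', dft_apply, smul_eq_mul, map_sum, map_mul, sum_mul_sum]
  rw [sum_comm, mul_sum]
  refine sum_congr rfl fun j _ => ?_
  calc _ = ∑ l, Φ j * conj (Φ l) *
        ∑ k, stdAddChar (-(j * k)) * conj (stdAddChar (-(l * k))) := by
        rw [sum_comm]
        refine sum_congr rfl fun l _ => ?_
        rw [mul_sum]
        exact sum_congr rfl fun k _ => by ring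
    _ = _ := by simp [hchar, mul_comm]

theorem two_mul_sin_pi_div_le_norm_stdAddChar_sub_one {k : ZMod N} (hk : k ≠ 0) :
    2 * sin (π / N) ≤ ‖stdAddChar k - 1‖ := by
  have hexp : (stdAddChar k : ℂ) = Complex.exp (Complex.I * ↑(2 * π * k.val / N)) := by
    rw [stdAddChar_apply, toCircle_apply]
    push_cast
    ring_nf
  rw [hexp, Complex.norm_exp_I_mul_ofReal_sub_one, Real.norm_eq_abs, abs_mul, abs_two]
  gcongr
  refine le_trans ?_ (le_abs_self _)
  rw [show 2 * π * k.val / N / 2 = π * k.val / N by ring]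
  exact Real.sin_pi_div_le_sin_pi_mul_div (Nat.one_le_iff_ne_zero.mpr ((val_ne_zero k).mpr hk))
    (val_lt k)

theorem dft_sub_comp_add_one (Φ : ZMod N → ℂ) (k : ZMod N) :
    𝓕 (fun j ↦ Φ (j + 1) - Φ j) k = (stdAddChar k - 1) * 𝓕 Φ k := by
  rw [show (fun j ↦ Φ (j + 1) - Φ j) = (fun j ↦ Φ (j + 1)) - Φ from rfl, map_sub, Pi.sub_apply,
    dft_comp_add_right, one_mul, smul_eq_mul, sub_mul, one_mul]

theorem mul_sum_norm_sq_le_sum_norm_sub_sq {Φ : ZMod N → ℂ} (h0 : ∑ j, Φ j = 0) :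
    (2 * sin (π / N)) ^ 2 * ∑ j, ‖Φ j‖ ^ 2 ≤ ∑ j, ‖Φ (j + 1) - Φ j‖ ^ 2 := by
  have hsin : 0 ≤ sin (π / N) := sin_nonneg_of_nonneg_of_le_pi (by positivity)
    (div_le_self pi_pos.le (by exact_mod_cast Nat.one_le_iff_ne_zero.mpr (NeZero.ne N)))
  have hmode (k : ZMod N) :
      (2 * sin (π / N)) ^ 2 * ‖𝓕 Φ k‖ ^ 2 ≤ ‖𝓕 (fun j ↦ Φ (j + 1) - Φ j) k‖ ^ 2 := by
    rcases eq_or_ne k 0 with rfl | hk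
    · simp [dft_apply_zero, h0]
    · rw [dft_sub_comp_add_one, norm_mul, mul_pow ‖stdAddChar k - 1‖]
      gcongr
      exact two_mul_sin_pi_div_le_norm_stdAddChar_sub_one hk
  have hN : (0 : ℝ) < N := by exact_mod_cast Nat.pos_of_neZero N
  refine le_of_mul_le_mul_left ?_ hN
  rw [← sum_norm_sq_dft, mul_left_comm, ← sum_norm_sq_dft, mul_sum]
  exact sum_le_sum fun k _ => hmode k

end ZMod

/-- On `range (2 * n)`, `x ∘ foldIndex n` is `x 0, …, x (n - 1), x (n - 1), …, x 0`: the even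
extension of `x` to a cycle of length `2 * n`. -/
def foldIndex (n i : ℕ) : ℕ := min i (2 * n - 1 - i)

theorem sum_range_two_mul_comp_foldIndex {M : Type*} [AddCommMonoid M] (n : ℕ) (f : ℕ → M) :
    ∑ i ∈ range (2 * n), f (foldIndex n i) = 2 • ∑ i ∈ range n, f i := by
  rw [two_mul, sum_range_add, two_nsmul]
  congr 1
  · refine sum_congr rfl fun i hi => ?_
    rw [mem_range] at hi
    rw [foldIndex, min_eq_left (by omega)]
  · rw [← sum_range_reflect]
    refine sum_congr rfl fun i hi => ?_
    rw [mem_range] at hi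
    rw [foldIndex, min_eq_right (by omega), show 2 * n - 1 - (n + (n - 1 - i)) = i by omega]

theorem sum_range_two_mul_sub_sq_foldIndex (n : ℕ) (x : ℕ → ℝ) :
    ∑ i ∈ range (2 * n), (x (foldIndex n ((i + 1) % (2 * n))) - x (foldIndex n i)) ^ 2 =
      2 * ∑ i ∈ range (n - 1), (x (i + 1) - x i) ^ 2 := by
  rcases n with _ | k
  · simp
  have hfold_lt (i : ℕ) (hi : i < k + 1) : foldIndex (k + 1) i = i := by
    unfold foldIndex; omega
  have hfold_ge (j : ℕ) (hj : j < k + 1) : foldIndex (k + 1) (k + 1 + j) = k - j := by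
    unfold foldIndex; omega
  have hlow : ∑ i ∈ range k,
      (x (foldIndex (k + 1) ((i + 1) % (k + 1 + k + 1))) - x (foldIndex (k + 1) i)) ^ 2 =
      ∑ i ∈ range k, (x (i + 1) - x i) ^ 2 :=
    sum_congr rfl fun i hi => by
      rw [mem_range] at hi
      rw [Nat.mod_eq_of_lt (by omega), hfold_lt i (by omega), hfold_lt (i + 1) (by omega)]
  have hhigh : ∑ j ∈ range k, (x (foldIndex (k + 1) ((k + 1 + j + 1) % (k + 1 + k + 1))) -
      x (foldIndex (k + 1) (k + 1 + j))) ^ 2 = ∑ i ∈ range k, (x (i + 1) - x i) ^ 2 := by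
    rw [← sum_range_reflect]
    refine sum_congr rfl fun j hj => ?_
    rw [mem_range] at hj
    rw [Nat.mod_eq_of_lt (by omega), add_assoc, hfold_ge _ (by omega), hfold_ge _ (by omega),
      show k - (k - 1 - j + 1) = j by omega, show k - (k - 1 - j) = j + 1 by omega]
    ring
  have hturn : foldIndex (k + 1) (k + 1) = k := by unfold foldIndex; omega
  have hwrap : foldIndex (k + 1) (k + 1 + k) = 0 := by unfold foldIndex; omega
  rw [show 2 * (k + 1) = (k + 1) + k + 1 by ring, sum_range_succ, sum_range_add, sum_range_succ,
    Nat.add_sub_cancel, hlow, hhigh, Nat.mod_eq_of_lt (by omega), hturn, hfold_lt k (by omega),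
    Nat.mod_self, hfold_lt 0 (by omega), hwrap]
  ring

theorem two_mul_one_sub_cos_mul_sum_sq_le {n : ℕ} (x : ℕ → ℝ) (h0 : ∑ i ∈ range n, x i = 0) :
    2 * (1 - cos (π / n)) * ∑ i ∈ range n, x i ^ 2 ≤
      ∑ i ∈ range (n - 1), (x (i + 1) - x i) ^ 2 := by
  rcases Nat.eq_zero_or_pos n with rfl | hn
  · simp
  have : NeZero (2 * n) := ⟨by omega⟩
  have hcycle := ZMod.mul_sum_norm_sq_le_sum_norm_sub_sq (N := 2 * n)
    (Φ := fun j ↦ (x (foldIndex n j.val) : ℂ)) (by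
      rw [ZMod.sum_comp_val (fun i ↦ (x (foldIndex n i) : ℂ)),
        sum_range_two_mul_comp_foldIndex n (fun i ↦ (x i : ℂ)), ← Complex.ofReal_sum, h0,
        Complex.ofReal_zero, smul_zero])
  simp only [ZMod.val_add_one, ← Complex.ofReal_sub, Complex.norm_real, Real.norm_eq_abs,
    sq_abs] at hcycle
  rw [ZMod.sum_comp_val (fun i ↦ x (foldIndex n i) ^ 2),
    ZMod.sum_comp_val (fun i ↦ (x (foldIndex n ((i + 1) % (2 * n))) - x (foldIndex n i)) ^ 2),
    sum_range_two_mul_comp_foldIndex n (fun i ↦ x i ^ 2), sum_range_two_mul_sub_sq_foldIndex,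
    nsmul_eq_mul] at hcycle
  have hcos : 2 * (1 - cos (π / n)) = (2 * sin (π / (2 * n : ℕ))) ^ 2 := by
    rw [show π / n = 2 * (π / (2 * n : ℕ)) by push_cast; field_simp, cos_two_mul, cos_sq']
    ring
  rw [hcos]
  push_cast at hcycle ⊢
  linarith

theorem sum_Ico_sub_sq_le_sq_sub {g : ℕ → ℝ} {a b : ℕ} (hab : a ≤ b)
    (hg : MonotoneOn g (Set.Icc a b)) :
    ∑ i ∈ Ico a b, (g (i + 1) - g i) ^ 2 ≤ (g b - g a) ^ 2 := by
  rw [← sum_Ico_sub g hab]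
  refine sum_sq_le_sq_sum_of_nonneg fun i hi => ?_
  rw [mem_Ico] at hi
  exact sub_nonneg.mpr (hg ⟨by omega, by omega⟩ ⟨by omega, by omega⟩ (Nat.le_succ i))

def Sym2.Crosses {α : Type*} (S : Set α) (e : Sym2 α) : Prop :=
  (∃ w ∈ e, w ∈ S) ∧ ∃ w ∈ e, w ∉ S

namespace SimpleGraph

variable {V : Type*} [Fintype V]

noncomputable def edgeBoundary (G : SimpleGraph V) (S : Set V) : Finset (Sym2 V) :=
  {e ∈ G.edgeFinset | e.Crosses S}

theorem edgeConnectivity_le_card_edgeBoundary (G : SimpleGraph V) {S : Set V} {a b : V}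
    (ha : a ∈ S) (hb : b ∉ S) : edgeConnectivity G ≤ #(G.edgeBoundary S) := by
  refine Nat.sInf_le ⟨G.edgeBoundary S, fun e he => ?_, rfl, fun hconn => ?_⟩
  · exact mem_edgeFinset.mp (mem_filter.mp he).1
  · obtain ⟨p⟩ := hconn.preconnected a b
    obtain ⟨d, -, hd, hd'⟩ := p.exists_boundary_dart S ha hb
    have hadj := d.adj
    rw [deleteEdges_adj] at hadj
    exact hadj.2 (mem_filter.mpr ⟨mem_edgeFinset.mpr hadj.1,
      ⟨⟨_, Sym2.mem_mk_left _ _, hd⟩, ⟨_, Sym2.mem_mk_right _ _, hd'⟩⟩⟩)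

noncomputable def dirichletEnergy (G : SimpleGraph V) (f : V → ℝ) : ℝ :=
  ∑ e ∈ G.edgeFinset, Sym2.lift ⟨fun u v => |f u - f v| ^ 2,
    fun u v => by dsimp only; rw [abs_sub_comm]⟩ e

end SimpleGraph

namespace Tuple

variable {n : ℕ}

noncomputable def sortedValue (f : Fin n → ℝ) (i : ℕ) : ℝ :=
  if h : i < n then f (sort f ⟨i, h⟩) else 0

theorem sortedValue_symm_sort (f : Fin n → ℝ) (v : Fin n) :
    sortedValue f ((sort f).symm v) = f v := by
  simp [sortedValue]

theorem monotoneOn_sortedValue (f : Fin n → ℝ) : MonotoneOn (sortedValue f) (Set.Iio n) :=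
  fun i hi j hj hij => by
    simp only [sortedValue, dif_pos (show i < n from hi), dif_pos (show j < n from hj)]
    exact monotone_sort f (show (⟨i, hi⟩ : Fin n) ≤ ⟨j, hj⟩ from hij)

theorem sum_range_sortedValue {M : Type*} [AddCommMonoid M] (f : Fin n → ℝ) (F : ℝ → M) :
    ∑ i ∈ range n, F (sortedValue f i) = ∑ v, F (f v) := by
  rw [← Fin.sum_univ_eq_sum_range (fun i ↦ F (sortedValue f i)), ← Equiv.sum_comp (sort f).symm]
  simp [sortedValue_symm_sort]

theorem sum_crosses_sortedValue_sub_sq_le (f : Fin n → ℝ) (u v : Fin n) :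
    ∑ i ∈ range (n - 1), (if s(u, v).Crosses {w | ((sort f).symm w : ℕ) ≤ i}
      then (sortedValue f (i + 1) - sortedValue f i) ^ 2 else 0) ≤ (f u - f v) ^ 2 := by
  wlog huv : ((sort f).symm u : ℕ) ≤ (sort f).symm v generalizing u v
  · simpa only [Sym2.eq_swap, ← neg_sub (f u), neg_sq] using this v u (by omega)
  set a : ℕ := ((sort f).symm u : ℕ)
  set b : ℕ := ((sort f).symm v : ℕ)
  have hb : b < n := ((sort f).symm v).isLt
  have hcross :
      (range (n - 1)).filter (fun i ↦ s(u, v).Crosses {w | ((sort f).symm w : ℕ) ≤ i}) =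
        Ico a b := by
    ext i
    simp only [Sym2.Crosses, mem_filter, mem_range, mem_Ico, Sym2.mem_iff, exists_eq_or_imp,
      exists_eq_left, Set.mem_ofPred_eq]
    omega
  rw [← sum_filter, hcross, ← sortedValue_symm_sort f u, ← sortedValue_symm_sort f v, ← neg_sub,
    neg_sq]
  exact sum_Ico_sub_sq_le_sq_sub huv ((monotoneOn_sortedValue f).mono
    fun i hi => lt_of_le_of_lt hi.2 hb)

end Tuple

open Tuple in
theorem SimpleGraph.edgeConnectivity_mul_sum_sortedValue_sub_sq_le {n : ℕ}
    (G : SimpleGraph (Fin n)) (f : Fin n → ℝ) :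
    edgeConnectivity G * ∑ i ∈ range (n - 1), (sortedValue f (i + 1) - sortedValue f i) ^ 2 ≤
      G.dirichletEnergy f := by
  have hcut (i : ℕ) (hi : i ∈ range (n - 1)) :
      edgeConnectivity G ≤ #(G.edgeBoundary {w | ((sort f).symm w : ℕ) ≤ i}) := by
    rw [mem_range] at hi
    refine G.edgeConnectivity_le_card_edgeBoundary (a := sort f ⟨0, by omega⟩)
      (b := sort f ⟨n - 1, by omega⟩) ?_ ?_
    · simp
    · simp only [Set.mem_ofPred_eq, Equiv.symm_apply_apply, not_le]
      omega
  calc (edgeConnectivity G : ℝ) *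
        ∑ i ∈ range (n - 1), (sortedValue f (i + 1) - sortedValue f i) ^ 2
      ≤ ∑ i ∈ range (n - 1), (#(G.edgeBoundary {w | ((sort f).symm w : ℕ) ≤ i}) : ℝ) *
          (sortedValue f (i + 1) - sortedValue f i) ^ 2 := by
        rw [mul_sum]
        gcongr with i hi
        exact_mod_cast hcut i hi
    _ = ∑ e ∈ G.edgeFinset, ∑ i ∈ range (n - 1),
          (if e.Crosses {w | ((sort f).symm w : ℕ) ≤ i}
            then (sortedValue f (i + 1) - sortedValue f i) ^ 2 else 0) := by
        rw [sum_comm]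
        refine sum_congr rfl fun i _ => ?_
        rw [← sum_filter, sum_const, nsmul_eq_mul, edgeBoundary]
    _ ≤ G.dirichletEnergy f := by
        refine sum_le_sum fun e _ => ?_
        induction e using Sym2.ind with
        | h u v =>
          rw [Sym2.lift_mk]
          dsimp only
          rw [sq_abs]
          exact sum_crosses_sortedValue_sub_sq_le f u v

open Tuple in
theorem two_mul_one_sub_cos_mul_sum_sub_mean_sq_le {n : ℕ} (f : Fin n → ℝ) :
    2 * (1 - cos (π / n)) * ∑ v, (f v - (∑ w, f w) / n) ^ 2 ≤
      ∑ i ∈ range (n - 1), (sortedValue f (i + 1) - sortedValue f i) ^ 2 := by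
  set m := (∑ w, f w) / n
  have hmean : ∑ i ∈ range n, (sortedValue f i - m) = 0 := by
    rw [sum_range_sortedValue f (· - m), sum_sub_distrib, sum_const, card_univ, Fintype.card_fin,
      nsmul_eq_mul]
    rcases Nat.eq_zero_or_pos n with rfl | hn
    · simp
    · rw [mul_div_cancel₀ _ (by positivity), sub_self]
  have hpath := two_mul_one_sub_cos_mul_sum_sq_le _ hmean
  simpa only [sum_range_sortedValue f (fun t ↦ (t - m) ^ 2), sub_sub_sub_cancel_right] using hpath

theorem SimpleGraph.sum_sq_mul_degree_le_maxDegree_mul {V : Type*} [Fintype V] (G : SimpleGraph V)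
    {f : V → ℝ} (hf : ∑ v, f v * G.degree v = 0) (c : ℝ) :
    ∑ v, |f v| ^ 2 * G.degree v ≤ G.maxDegree * ∑ v, (f v - c) ^ 2 := by
  have hshift : ∑ v, (f v - c) ^ 2 * G.degree v =
      ∑ v, |f v| ^ 2 * G.degree v + c ^ 2 * ∑ v, (G.degree v : ℝ) := by
    have hexpand (v : V) : (f v - c) ^ 2 * G.degree v =
        |f v| ^ 2 * G.degree v - 2 * c * (f v * G.degree v) + c ^ 2 * G.degree v := by
      rw [sq_abs]; ring
    simp only [hexpand, sum_add_distrib, sum_sub_distrib, ← mul_sum, hf]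
    ring
  calc ∑ v, |f v| ^ 2 * G.degree v ≤ ∑ v, (f v - c) ^ 2 * G.degree v := by
        rw [hshift]
        have : 0 ≤ c ^ 2 * ∑ v, (G.degree v : ℝ) := by positivity
        linarith
    _ ≤ ∑ v, (f v - c) ^ 2 * G.maxDegree := by
        gcongr with v
        exact_mod_cast G.degree_le_maxDegree v
    _ = G.maxDegree * ∑ v, (f v - c) ^ 2 := by rw [← sum_mul, mul_comm]

theorem exists_ne_zero_sum_mul_eq_zero {V : Type*} [Fintype V] {w : V → ℝ} {u v : V}
    (huv : u ≠ v) (hu : w u ≠ 0) : ∃ f : V → ℝ, f ≠ 0 ∧ ∑ x, f x * w x = 0 := by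
  refine ⟨Pi.single u (w v) - Pi.single v (w u), fun h => hu ?_, ?_⟩
  · simpa [huv.symm] using congr_fun h v
  · simp [mul_sub, sum_sub_distrib, Pi.single_apply, mul_comm]

theorem alpha1_fiedler_lower_bound {V : ℕ} (hV : 2 ≤ V) (G : SimpleGraph (Fin V))
    (hG : G.Connected) :
    alpha1 G ≥ 2 * (edgeConnectivity G : ℝ) / (G.maxDegree : ℝ) *
      (1 - Real.cos (π / V)) := by
  have : Nontrivial (Fin V) := Fin.nontrivial_iff_two_le.mpr hV
  have hdeg (v : Fin V) : 0 < G.degree v := hG.preconnected.degree_pos_of_nontrivial v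
  obtain ⟨u, v, huv⟩ := exists_pair_ne (Fin V)
  obtain ⟨f₀, hf₀, horth₀⟩ := exists_ne_zero_sum_mul_eq_zero huv (w := fun v ↦ (G.degree v : ℝ))
    (by exact_mod_cast (hdeg u).ne')
  refine le_csInf ⟨_, f₀, hf₀, horth₀, rfl⟩ ?_
  rintro _ ⟨f, hf, horth, rfl⟩
  obtain ⟨w, hw⟩ : ∃ w, f w ≠ 0 := Function.ne_iff.mp hf
  have hD : 0 < ∑ v, |f v| ^ 2 * (G.degree v : ℝ) := sum_pos' (fun v _ => by positivity)
    ⟨w, mem_univ w, mul_pos (pow_pos (abs_pos.mpr hw) 2) (by exact_mod_cast hdeg w)⟩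
  have hΔ : (0 : ℝ) < G.maxDegree := by exact_mod_cast (hdeg u).trans_le (G.degree_le_maxDegree u)
  have hcos : 0 ≤ 1 - cos (π / V) := sub_nonneg.mpr (cos_le_one _)
  rw [le_div_iff₀ hD]
  set m := (∑ v, f v) / V
  calc 2 * (edgeConnectivity G : ℝ) / G.maxDegree * (1 - cos (π / V)) *
        ∑ v, |f v| ^ 2 * (G.degree v : ℝ)
      ≤ 2 * (edgeConnectivity G : ℝ) / G.maxDegree * (1 - cos (π / V)) *
        (G.maxDegree * ∑ v, (f v - m) ^ 2) := by
        gcongr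
        exact G.sum_sq_mul_degree_le_maxDegree_mul horth m
    _ = edgeConnectivity G * (2 * (1 - cos (π / V)) * ∑ v, (f v - m) ^ 2) := by
        field_simp
    _ ≤ edgeConnectivity G *
        ∑ i ∈ range (V - 1), (Tuple.sortedValue f (i + 1) - Tuple.sortedValue f i) ^ 2 := by
        gcongr
        exact two_mul_one_sub_cos_mul_sum_sub_mean_sq_le f
    _ ≤ G.dirichletEnergy f := G.edgeConnectivity_mul_sum_sortedValue_sub_sq_le f
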